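/- arXiv:1810.11643 — 4 statements merged into one kernel-verified Lean document; each statement's English description precedes it below -/
import Mathlib

section
/- Let X be a Hilbert space and A : X → X a bounded linear operator whose range has dimension at most r, and suppose I + A is invertible. Then there exist real (or complex) coefficients c_1, ..., c_{r+1} such that (I + A)^{-1} = I + Σ_{j=1}^{r+1} c_j A^j. -/
open scoped BigOperators

open Polynomial

/-- Key algebraic lemma: if `u` satisfies a monic polynomial of degree `≤ r+1`
and `1 + u` is a unit, then `(1+u)⁻¹` is a polynomial in `u` of degree `≤ r`. -/
lemma key_inverse_poly {S : Type*} [Ring S] [Algebra ℝ S] (u : S) (hu : IsUnit (1 + u))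
    (r : ℕ) : ∀ n : ℕ, ∀ m : ℝ[X], m.natDegree ≤ n → m.natDegree ≤ r + 1 → m.Monic →
    Polynomial.aeval u m = 0 →
    ∃ g : ℝ[X], g.natDegree ≤ r ∧ (1 + u) * Polynomial.aeval u g = 1 := by
  intro n
  induction n with
  | zero =>
    intro m hn _ hm h0
    have hm1 : m = 1 := hm.natDegree_eq_zero.mp (Nat.le_zero.mp hn)
    rw [hm1, map_one] at h0
    exact ⟨0, by simp, by rw [map_zero, mul_zero, ← h0]⟩
  | succ n ih =>
    intro m hn hr hm h0
    set q : ℝ[X] := m /ₘ (X - C (-1)) with hq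
    set e : ℝ := m.eval (-1) with he
    have hdiv : C e + (X - C (-1)) * q = m := by
      rw [hq, he, ← modByMonic_X_sub_C_eq_C_eval]
      exact modByMonic_add_div m (X - C (-1))
    have hqdeg : q.natDegree = m.natDegree - 1 := by
      rw [hq, natDegree_divByMonic m (monic_X_sub_C (-1)), natDegree_X_sub_C]
    have haevalm : (0 : S) = algebraMap ℝ S e + (1 + u) * Polynomial.aeval u q := by
      have h := congrArg (Polynomial.aeval u) hdiv
      rw [h0, map_add, map_mul, map_sub, aeval_X, aeval_C, aeval_C, map_neg, map_one,
        sub_neg_eq_add, add_comm u 1] at h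
      exact h.symm
    by_cases hez : e = 0
    · -- m = (X+1) * q, so aeval q = 0 and we recurse
      rw [hez, map_zero, zero_add] at haevalm
      have hq0 : Polynomial.aeval u q = 0 :=
        hu.mul_left_cancel (by rw [← haevalm, mul_zero])
      by_cases hqz : q = 0
      ·
        exfalso
        rw [hqz, mul_zero, hez, map_zero, add_zero] at hdiv
        exact hm.ne_zero hdiv.symm
      have hqm : q.Monic := by
        have : ((X - C (-1)) * q).Monic := by
          rw [← zero_add ((X - C (-1)) * q), ← map_zero (C : ℝ →+* ℝ[X]), ← hez, hdiv]
          exact hm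
        exact (monic_X_sub_C (-1)).of_mul_monic_left this
      exact ih q (by omega) (by omega) hqm hq0
    · -- e ≠ 0 : inverse is -(1/e) • q
      refine ⟨(-e⁻¹) • q, ?_, ?_⟩
      · calc ((-e⁻¹) • q).natDegree ≤ q.natDegree := natDegree_smul_le _ _
          _ ≤ r := by omega
      · have h1 : (1 + u) * Polynomial.aeval u q = -(algebraMap ℝ S e) := by
          rw [eq_neg_iff_add_eq_zero, add_comm, ← haevalm]
        rw [map_smul, mul_smul_comm, h1, smul_neg, ← neg_smul, neg_neg,
          Algebra.smul_def, ← map_mul, inv_mul_cancel₀ hez, map_one]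

/-- Finite-rank correction formula for the inverse of `I + A` on a Hilbert space. -/
theorem finite_rank_correction
    {X : Type*} [NormedAddCommGroup X] [InnerProductSpace ℝ X] [CompleteSpace X]
    (r : ℕ) (A : X →L[ℝ] X)
    [FiniteDimensional ℝ (LinearMap.range (A : X →ₗ[ℝ] X))]
    (hrange : Module.finrank ℝ (LinearMap.range (A : X →ₗ[ℝ] X)) ≤ r)
    (hinv : IsUnit (1 + A)) :
    ∃ c : Fin (r + 1) → ℝ,
      Ring.inverse (1 + A) = 1 + ∑ j : Fin (r + 1), c j • A ^ ((j : ℕ) + 1) := by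
  classical
  set AL : X →ₗ[ℝ] X := (A : X →ₗ[ℝ] X) with hAL
  set V : Submodule ℝ X := LinearMap.range AL with hV
  have hmem : ∀ x ∈ V, AL x ∈ V := fun x _ => LinearMap.mem_range_self AL x
  set f : V →ₗ[ℝ] V := AL.restrict hmem with hf
  have hp0 : Polynomial.aeval f f.charpoly = 0 := LinearMap.aeval_self_charpoly f
  set p : ℝ[X] := f.charpoly with hp
  -- the coercion algebra hom
  let φ : (X →L[ℝ] X) →ₐ[ℝ] (X →ₗ[ℝ] X) :=
    { ContinuousLinearMap.toLinearMapRingHom with commutes' := fun r => rfl }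
  have hφA : φ A = AL := rfl
  have hφinj : Function.Injective φ := fun a b h => by
    ext x; exact congrArg (fun g => g x) h
  -- commuting with restriction
  have hcomm : ∀ q : ℝ[X], ∀ x : X, ∀ hx : x ∈ V,
      (Polynomial.aeval AL q) x = ((Polynomial.aeval f q) ⟨x, hx⟩ : X) := by
    intro q
    induction q using Polynomial.induction_on' with
    | add s t hs ht =>
      intro x hx
      rw [map_add, map_add, LinearMap.add_apply, hs x hx, ht x hx]
      rfl
    | monomial n a =>
      intro x hx
      rw [aeval_monomial, aeval_monomial]
      have hpow : f ^ n = (AL ^ n).restrict (Module.End.pow_apply_mem_of_forall_mem n hmem) :=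
        Module.End.pow_restrict n hmem
      have : ((f ^ n) ⟨x, hx⟩ : X) = (AL ^ n) x := by
        rw [hpow]; rfl
      simp only [Module.End.mul_apply, Algebra.algebraMap_eq_smul_one, LinearMap.smul_apply,
        Module.End.one_apply, SetLike.val_smul]
      rw [this]
  -- the annihilating polynomial p * X
  have hannL : Polynomial.aeval AL (p * Polynomial.X) = 0 := by
    ext x
    rw [map_mul, aeval_X, Module.End.mul_apply]
    have hx : AL x ∈ V := LinearMap.mem_range_self AL x
    rw [hcomm p (AL x) hx, hp0]
    rfl
  have hann : Polynomial.aeval A (p * Polynomial.X) = 0 := by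
    apply hφinj
    rw [map_zero]
    calc φ (Polynomial.aeval A (p * Polynomial.X))
        = Polynomial.aeval (φ A) (p * Polynomial.X) :=
          (Polynomial.aeval_algHom_apply φ A _).symm
      _ = 0 := by rw [hφA]; exact hannL
  have hmon : (p * Polynomial.X).Monic := (f.charpoly_monic).mul monic_X
  have hdeg : (p * Polynomial.X).natDegree ≤ r + 1 := by
    rw [(f.charpoly_monic).natDegree_mul monic_X, natDegree_X, f.charpoly_natDegree]
    omega
  obtain ⟨g, hgdeg, hg⟩ := key_inverse_poly A hinv r (r + 1) (p * Polynomial.X) hdeg hdeg hmon hann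
  refine ⟨fun j => -(g.coeff (j : ℕ)), ?_⟩
  have hGinv : Ring.inverse (1 + A) = Polynomial.aeval A g := by
    have h2 := congrArg (fun z => Ring.inverse (1 + A) * z) hg
    simpa [← mul_assoc, Ring.inverse_mul_cancel _ hinv] using h2.symm
  have hG1 : Polynomial.aeval A g = 1 - A * Polynomial.aeval A g := by
    have hmul : (1 + A) * Polynomial.aeval A g
        = Polynomial.aeval A g + A * Polynomial.aeval A g := by
      rw [add_mul, one_mul]
    rw [eq_sub_iff_add_eq, ← hmul, hg]
  have hexp : Polynomial.aeval A g = ∑ i ∈ Finset.range (r + 1), g.coeff i • A ^ i :=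
    Polynomial.aeval_eq_sum_range' (by omega) A
  rw [hGinv, hG1, hexp, Finset.mul_sum]
  rw [sub_eq_add_neg, ← Finset.sum_neg_distrib]
  congr 1
  rw [← Fin.sum_univ_eq_sum_range (fun i => -(A * (g.coeff i • A ^ i)))]
  apply Finset.sum_congr rfl
  intro j _
  rw [mul_smul_comm, ← neg_smul, ← pow_succ']
end

section
/- Let f : Λ → ℝ^m on a Bravais lattice Λ = A·ℤ^d satisfy |f(ℓ)| ≤ C(1+|ℓ|)^{−α} with α > d. Define the periodic projection f_N(ℓ) = Σ_{z ∈ ℤ^d} f(ℓ + 2N·B·z) (Poisson summation of the semi-discrete Fourier transform restricted to the discrete dual grid). Then sup_{ℓ ∈ Λ_N} |f(ℓ) − f_N(ℓ)| ≤ C' N^{−α} for a constant C' independent of N. -/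
open scoped BigOperators
open Matrix

/-- The Euclidean norm of a vector in `ℝ^d`. -/
noncomputable def eunorm (d : ℕ) (x : Fin d → ℝ) : ℝ :=
  ‖(WithLp.equiv 2 (Fin d → ℝ)).symm x‖

lemma coord_le_eunorm {d : ℕ} (x : Fin d → ℝ) (j : Fin d) :
    |x j| ≤ eunorm d x := by
  unfold eunorm
  rw [EuclideanSpace.norm_eq]
  rw [show |x j| = Real.sqrt (|x j| ^ 2) by rw [Real.sqrt_sq_eq_abs, abs_abs]]
  apply Real.sqrt_le_sqrt
  have : |x j| ^ 2 = ‖(WithLp.equiv 2 (Fin d → ℝ)).symm x j‖ ^ 2 := by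
    simp [WithLp.equiv_symm_apply, PiLp.toLp_apply, Real.norm_eq_abs]
  rw [this]
  exact Finset.single_le_sum (f := fun i => ‖(WithLp.equiv 2 (Fin d → ℝ)).symm x i‖ ^ 2)
    (fun i _ => by positivity) (Finset.mem_univ j)

lemma eunorm_mono {d : ℕ} {x y : Fin d → ℝ} (h : ∀ i, |x i| ≤ |y i|) :
    eunorm d x ≤ eunorm d y := by
  unfold eunorm
  rw [EuclideanSpace.norm_eq, EuclideanSpace.norm_eq]
  apply Real.sqrt_le_sqrt
  apply Finset.sum_le_sum
  intro i _
  simp only [WithLp.equiv_symm_apply, PiLp.toLp_apply, Real.norm_eq_abs]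
  exact pow_le_pow_left₀ (abs_nonneg _) (h i) 2

lemma summable_pi_prod {g : ℤ → ℝ} (hg : Summable g) (hg0 : ∀ m, 0 ≤ g m) :
    ∀ n : ℕ, Summable fun z : Fin n → ℤ => ∏ j, g (z j) := by
  intro n
  induction n with
  | zero => exact Summable.of_finite
  | succ n ih =>
    have hsum : Summable fun p : ℤ × (Fin n → ℤ) => g p.1 * ∏ j, g (p.2 j) :=
      Summable.mul_of_nonneg (f := g) (g := fun z : Fin n → ℤ => ∏ j, g (z j))
        hg ih hg0 fun z => Finset.prod_nonneg fun j _ => hg0 _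
    have h2 : Summable fun p : ℤ × (Fin n → ℤ) =>
        ∏ j, g ((Fin.consEquiv fun _ : Fin (n + 1) => ℤ) p j) := by
      refine hsum.congr fun p => ?_
      simp only [Fin.consEquiv, Equiv.coe_fn_mk]
      rw [Fin.prod_univ_succ, Fin.cons_zero]
      exact congrArg _ (Finset.prod_congr rfl fun j _ => by rw [Fin.cons_succ])
    exact (Equiv.summable_iff _).mp h2

set_option maxHeartbeats 1000000 in
/-- Error estimate for the periodic projection (Poisson summation): if `f` decays
algebraically on the lattice `Λ = A·ℤ^d` with rate `α > d`, then the periodised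
function `f_N(ℓ) = Σ_z f(ℓ + 2N·B·z)` satisfies `sup_{Λ_N} |f − f_N| ≲ N^{−α}`. -/
theorem periodic_projection_error
    (d mdim : ℕ) (A B : Matrix (Fin d) (Fin d) ℝ) (hA : IsUnit A.det) (hB : IsUnit B.det)
    (T : Matrix (Fin d) (Fin d) ℤ) (hT : B = A * T.map (Int.cast : ℤ → ℝ))
    (f : (Fin d → ℝ) → EuclideanSpace ℝ (Fin mdim))
    (α C : ℝ) (hα : (d : ℝ) < α) (hC : 0 ≤ C)
    (hdecay : ∀ z : Fin d → ℤ, ‖f (A.mulVec fun j => (z j : ℝ))‖ ≤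
      C * (1 + eunorm d (A.mulVec fun j => (z j : ℝ))) ^ (-α)) :
    ∃ C' : ℝ, 0 < C' ∧ ∀ N : ℕ, 0 < N → ∀ ℓ : Fin d → ℝ,
      ((∃ z : Fin d → ℤ, ℓ = A.mulVec fun j => (z j : ℝ)) ∧
        (∀ j, -(N : ℝ) < B⁻¹.mulVec ℓ j ∧ B⁻¹.mulVec ℓ j ≤ N)) →
      ‖f ℓ - ∑' z : Fin d → ℤ, f (ℓ + (2 * N : ℝ) • B.mulVec fun j => (z j : ℝ))‖
        ≤ C' * (N : ℝ) ^ (-α) := by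
  rcases Nat.eq_zero_or_pos d with hd0 | hd
  · subst hd0
    refine ⟨1, one_pos, fun N hN ℓ _ => ?_⟩
    have h1 : (∑' z : Fin 0 → ℤ, f (ℓ + (2 * N : ℝ) • B.mulVec fun j => (z j : ℝ))) = f ℓ := by
      rw [tsum_eq_single 0 (fun b' hb' => absurd (Subsingleton.elim b' 0) hb')]
      have : ℓ + (2 * N : ℝ) • B.mulVec (fun j => (((0 : Fin 0 → ℤ)) j : ℝ)) = ℓ :=
        Subsingleton.elim _ _
      rw [this]
    rw [h1, sub_self, norm_zero]
    positivity
  have hd' : (0 : ℝ) < d := by exact_mod_cast hd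
  have hα0 : (0 : ℝ) < α := lt_of_le_of_lt hd'.le hα
  set β := α / d with hβdef
  have hβ : 1 < β := (one_lt_div hd').mpr hα
  set g : ℤ → ℝ := fun m => (1 + |(m : ℝ)|) ^ (-β) with hgdef
  have hg0 : ∀ m, 0 ≤ g m := fun m => Real.rpow_nonneg (by positivity) _
  have hgsum : Summable g := by
    refine (Real.summable_abs_int_rpow hβ).of_norm_bounded_eventually ?_
    refine Filter.eventually_cofinite.mpr (Set.Finite.subset (Set.finite_singleton 0) ?_)
    intro m hm
    simp only [Set.mem_setOf_eq] at hm
    rw [Set.mem_singleton_iff]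
    by_contra h0
    apply hm
    have hm0 : (0 : ℝ) < |(m : ℝ)| := abs_pos.mpr (Int.cast_ne_zero.mpr h0)
    rw [Real.norm_eq_abs, abs_of_nonneg (hg0 m)]
    exact Real.rpow_le_rpow_of_nonpos hm0 (by linarith) (neg_nonpos.mpr (by linarith))
  have hPsum : Summable fun z : Fin d → ℤ => ∏ j, g (z j) := summable_pi_prod hgsum hg0 d
  set Sg := ∑' z : Fin d → ℤ, ∏ j, g (z j) with hSgdef
  have hSg0 : 0 ≤ Sg := tsum_nonneg fun z => Finset.prod_nonneg fun j _ => hg0 _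
  set L := LinearMap.toContinuousLinearMap (Matrix.toEuclideanLin B⁻¹) with hLdef
  set c := max 1 ‖L‖ with hcdef
  have hc1 : (1 : ℝ) ≤ c := le_max_left _ _
  have hc0 : (0 : ℝ) < c := lt_of_lt_of_le one_pos hc1
  set K := C * (2 * c) ^ α with hKdef
  have h2c : (0 : ℝ) < 2 * c := by linarith
  have hK0 : 0 ≤ K := mul_nonneg hC (Real.rpow_nonneg h2c.le _)
  refine ⟨K * Sg + 1, by positivity, fun N hN ℓ hmem => ?_⟩
  obtain ⟨⟨z₀, hz₀⟩, hbox⟩ := hmem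
  have hN' : (0 : ℝ) < N := by exact_mod_cast hN
  -- lattice representation of the translated points
  have hy : ∀ z : Fin d → ℤ, ℓ + (2 * N : ℝ) • B.mulVec (fun j => (z j : ℝ))
      = A.mulVec fun j => (((z₀ + (2 * (N : ℤ)) • T.mulVec z)) j : ℝ) := by
    intro z
    rw [hz₀, hT, ← Matrix.mulVec_mulVec, ← Matrix.mulVec_smul, ← Matrix.mulVec_add]
    funext i
    simp only [Pi.add_apply, Pi.smul_apply, Matrix.mulVec, dotProduct,
      Matrix.map_apply, smul_eq_mul, Finset.mul_sum]
    push_cast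
    ring
  have hdec : ∀ z : Fin d → ℤ,
      ‖f (ℓ + (2 * N : ℝ) • B.mulVec fun j => (z j : ℝ))‖ ≤
        C * (1 + eunorm d (ℓ + (2 * N : ℝ) • B.mulVec fun j => (z j : ℝ))) ^ (-α) := by
    intro z
    rw [hy z]
    exact hdecay _
  -- coordinates after applying B⁻¹
  have hw : ∀ z : Fin d → ℤ, B⁻¹.mulVec (ℓ + (2 * N : ℝ) • B.mulVec fun j => (z j : ℝ))
      = B⁻¹.mulVec ℓ + (2 * N : ℝ) • fun j => (z j : ℝ) := by
    intro z
    rw [Matrix.mulVec_add, Matrix.mulVec_smul, Matrix.mulVec_mulVec,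
      Matrix.nonsing_inv_mul B hB, Matrix.one_mulVec]
  have hcoord : ∀ (z : Fin d → ℤ) (j : Fin d),
      (N : ℝ) * |(z j : ℝ)| ≤ |(B⁻¹.mulVec ℓ + (2 * N : ℝ) • fun j => (z j : ℝ)) j| := by
    intro z j
    obtain ⟨hb1, hb2⟩ := hbox j
    rcases eq_or_ne (z j) 0 with h | h
    · simp only [Pi.add_apply, Pi.smul_apply, h, Int.cast_zero, abs_zero, mul_zero,
        smul_eq_mul]
      exact abs_nonneg _
    · have h1 : (1 : ℝ) ≤ |(z j : ℝ)| := by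
        rw [← Int.cast_abs]
        exact_mod_cast Int.one_le_abs h
      have h2 : |B⁻¹.mulVec ℓ j| ≤ (N : ℝ) := abs_le.mpr ⟨le_of_lt hb1, hb2⟩
      have h3 : |(2 * N : ℝ) * (z j : ℝ)| - |(-(B⁻¹.mulVec ℓ j))| ≤
          |(2 * N : ℝ) * (z j : ℝ) - (-(B⁻¹.mulVec ℓ j))| :=
        abs_sub_abs_le_abs_sub _ _
      have heq : (B⁻¹.mulVec ℓ + (2 * N : ℝ) • fun j => (z j : ℝ)) j
          = B⁻¹.mulVec ℓ j + (2 * N : ℝ) * (z j : ℝ) := rfl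
      rw [heq]
      rw [abs_neg, sub_neg_eq_add, abs_mul,
        abs_of_nonneg (by linarith : (0 : ℝ) ≤ (2 * N : ℝ))] at h3
      have : |(2 * N : ℝ) * (z j : ℝ) + B⁻¹.mulVec ℓ j|
          = |B⁻¹.mulVec ℓ j + (2 * N : ℝ) * (z j : ℝ)| := by rw [add_comm]
      rw [this] at h3
      nlinarith
  -- lower bound on the norm via the operator norm of B⁻¹
  have hwle : ∀ z : Fin d → ℤ,
      (N : ℝ) * eunorm d (fun j => (z j : ℝ)) ≤
        c * (1 + eunorm d (ℓ + (2 * N : ℝ) • B.mulVec fun j => (z j : ℝ))) := by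
    intro z
    set y := ℓ + (2 * N : ℝ) • B.mulVec fun j => (z j : ℝ) with hydef
    have s1 : (N : ℝ) * eunorm d (fun j => (z j : ℝ)) ≤ eunorm d (B⁻¹.mulVec y) := by
      have hsm : (N : ℝ) * eunorm d (fun j => (z j : ℝ))
          = eunorm d ((N : ℝ) • fun j => (z j : ℝ)) := by
        unfold eunorm
        rw [WithLp.equiv_symm_apply, WithLp.toLp_smul, norm_smul, Real.norm_eq_abs, abs_of_nonneg hN'.le]
      rw [hsm]
      apply eunorm_mono
      intro i
      have : |((N : ℝ) • fun j => (z j : ℝ)) i| = (N : ℝ) * |(z i : ℝ)| := by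
        simp only [Pi.smul_apply, smul_eq_mul, abs_mul, abs_of_nonneg hN'.le]
      rw [this, hw z]
      exact hcoord z i
    have s2 : eunorm d (B⁻¹.mulVec y) ≤ c * eunorm d y := by
      have hLy : (WithLp.equiv 2 (Fin d → ℝ)).symm (B⁻¹.mulVec y)
          = L ((WithLp.equiv 2 (Fin d → ℝ)).symm y) := by
        rw [hLdef, LinearMap.coe_toContinuousLinearMap', WithLp.equiv_symm_apply, Matrix.toEuclideanLin_apply_piLp_toLp]
      unfold eunorm
      rw [hLy]
      calc ‖L ((WithLp.equiv 2 (Fin d → ℝ)).symm y)‖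
          ≤ ‖L‖ * ‖(WithLp.equiv 2 (Fin d → ℝ)).symm y‖ := L.le_opNorm _
        _ ≤ c * ‖(WithLp.equiv 2 (Fin d → ℝ)).symm y‖ :=
            mul_le_mul_of_nonneg_right (le_max_right _ _) (norm_nonneg _)
    have s3 : eunorm d y ≤ 1 + eunorm d y := by linarith
    calc (N : ℝ) * eunorm d (fun j => (z j : ℝ)) ≤ eunorm d (B⁻¹.mulVec y) := s1
      _ ≤ c * eunorm d y := s2
      _ ≤ c * (1 + eunorm d y) := mul_le_mul_of_nonneg_left s3 hc0.le
  -- per-term bound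
  have hterm : ∀ z : Fin d → ℤ, z ≠ 0 →
      ‖f (ℓ + (2 * N : ℝ) • B.mulVec fun j => (z j : ℝ))‖ ≤
        K * (N : ℝ) ^ (-α) * ∏ j, g (z j) := by
    intro z hz
    set E := eunorm d (fun j => (z j : ℝ)) with hEdef
    have hE1 : 1 ≤ E := by
      obtain ⟨j, hj⟩ : ∃ j, z j ≠ 0 := by
        by_contra h; push_neg at h; exact hz (funext h)
      have h1 : (1 : ℝ) ≤ |(z j : ℝ)| := by
        rw [← Int.cast_abs]; exact_mod_cast Int.one_le_abs hj
      have h2 := coord_le_eunorm (fun j => (z j : ℝ)) j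
      rw [← hEdef] at h2
      exact le_trans h1 h2
    have hE0 : (0 : ℝ) < E := lt_of_lt_of_le one_pos hE1
    have hprod : ∏ j, ((1 : ℝ) + |(z j : ℝ)|) ≤ (2 * E) ^ (d : ℕ) := by
      calc ∏ j, ((1 : ℝ) + |(z j : ℝ)|) ≤ ∏ _j : Fin d, (2 * E) := by
            apply Finset.prod_le_prod (fun j _ => by positivity)
            intro j _
            have := coord_le_eunorm (fun j => (z j : ℝ)) j
            rw [← hEdef] at this
            linarith
        _ = (2 * E) ^ (d : ℕ) := by
            rw [Finset.prod_const, Finset.card_univ, Fintype.card_fin]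
    have hP0 : (0 : ℝ) < ∏ j, ((1 : ℝ) + |(z j : ℝ)|) :=
      Finset.prod_pos fun j _ => by positivity
    have hgprod : ∏ j, g (z j) = (∏ j, ((1 : ℝ) + |(z j : ℝ)|)) ^ (-β) := by
      rw [hgdef]
      exact Real.finset_prod_rpow _ _ (fun j _ => by positivity) (-β)
    have hstep : (2 * E) ^ (-α) ≤ (∏ j, ((1 : ℝ) + |(z j : ℝ)|)) ^ (-β) := by
      have h2E : (0 : ℝ) < 2 * E := by linarith
      rw [Real.rpow_neg hP0.le, Real.rpow_neg h2E.le]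
      apply inv_anti₀ (Real.rpow_pos_of_pos hP0 β)
      calc (∏ j, ((1 : ℝ) + |(z j : ℝ)|)) ^ β ≤ ((2 * E) ^ (d : ℕ)) ^ β :=
            Real.rpow_le_rpow hP0.le hprod (by linarith)
        _ = (2 * E) ^ α := by
            rw [← Real.rpow_natCast (2 * E) d, ← Real.rpow_mul h2E.le]
            congr 1
            rw [hβdef]; field_simp
    have hu : (N : ℝ) * E / c ≤ 1 + eunorm d (ℓ + (2 * N : ℝ) • B.mulVec fun j => (z j : ℝ)) := by
      rw [div_le_iff₀ hc0]
      have := hwle z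
      rw [← hEdef] at this
      linarith [this]
    have hu0 : (0 : ℝ) < (N : ℝ) * E / c := by positivity
    have e1 : ((N : ℝ) * E / c) ^ (-α) = (2 * c) ^ α * ((N : ℝ) ^ (-α) * (2 * E) ^ (-α)) := by
      have hrw : (N : ℝ) * E / c = (N : ℝ) * (2 * E) * (2 * c)⁻¹ := by
        field_simp
      rw [hrw, Real.mul_rpow (by positivity) (by positivity),
        Real.mul_rpow (by positivity) (by positivity),
        Real.inv_rpow h2c.le, Real.rpow_neg h2c.le, inv_inv]
      ring
    calc ‖f (ℓ + (2 * N : ℝ) • B.mulVec fun j => (z j : ℝ))‖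
        ≤ C * (1 + eunorm d (ℓ + (2 * N : ℝ) • B.mulVec fun j => (z j : ℝ))) ^ (-α) := hdec z
      _ ≤ C * ((N : ℝ) * E / c) ^ (-α) :=
          mul_le_mul_of_nonneg_left
            (Real.rpow_le_rpow_of_nonpos hu0 hu (neg_nonpos.mpr hα0.le)) hC
      _ = C * (2 * c) ^ α * ((N : ℝ) ^ (-α) * (2 * E) ^ (-α)) := by rw [e1]; ring
      _ ≤ C * (2 * c) ^ α * ((N : ℝ) ^ (-α) * (∏ j, ((1 : ℝ) + |(z j : ℝ)|)) ^ (-β)) := by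
          apply mul_le_mul_of_nonneg_left _ (by positivity)
          exact mul_le_mul_of_nonneg_left hstep (Real.rpow_nonneg hN'.le _)
      _ = K * (N : ℝ) ^ (-α) * ∏ j, g (z j) := by
          rw [hgprod, hKdef]; ring
  -- summability of the series
  have hGsum : Summable fun z : Fin d → ℤ =>
      f (ℓ + (2 * N : ℝ) • B.mulVec fun j => (z j : ℝ)) := by
    refine Summable.of_norm_bounded_eventually
      (f := fun z : Fin d → ℤ => f (ℓ + (2 * N : ℝ) • B.mulVec fun j => (z j : ℝ)))
      (g := fun z => K * (N : ℝ) ^ (-α) * ∏ j, g (z j))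
      (hPsum.mul_left (K * (N : ℝ) ^ (-α))) ?_
    refine Filter.eventually_cofinite.mpr (Set.Finite.subset (Set.finite_singleton 0) ?_)
    intro z hz
    simp only [Set.mem_setOf_eq] at hz
    rw [Set.mem_singleton_iff]
    by_contra hne
    exact hz (hterm z hne)
  -- split off the zero term
  rw [Summable.tsum_eq_add_tsum_ite hGsum 0]
  have hG0 : ℓ + (2 * N : ℝ) • B.mulVec (fun j => (((0 : Fin d → ℤ)) j : ℝ)) = ℓ := by
    have : (fun j => (((0 : Fin d → ℤ)) j : ℝ)) = (0 : Fin d → ℝ) := by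
      funext j; simp
    rw [this, Matrix.mulVec_zero, smul_zero, add_zero]
  rw [hG0, sub_add_cancel_left, norm_neg]
  have hbound : ∀ z : Fin d → ℤ,
      ‖if z = 0 then 0 else f (ℓ + (2 * N : ℝ) • B.mulVec fun j => (z j : ℝ))‖ ≤
        K * (N : ℝ) ^ (-α) * ∏ j, g (z j) := by
    intro z
    rcases eq_or_ne z 0 with h | h
    · simp only [h, if_true, norm_zero]
      have : 0 ≤ ∏ j, g ((0 : Fin d → ℤ) j) := Finset.prod_nonneg fun j _ => hg0 _
      positivity
    · rw [if_neg h]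
      exact hterm z h
  have htsum : ‖∑' z : Fin d → ℤ,
      if z = 0 then 0 else f (ℓ + (2 * N : ℝ) • B.mulVec fun j => (z j : ℝ))‖ ≤
        K * (N : ℝ) ^ (-α) * Sg := by
    have hhs : HasSum (fun z : Fin d → ℤ => K * (N : ℝ) ^ (-α) * ∏ j, g (z j))
        (K * (N : ℝ) ^ (-α) * Sg) := by
      rw [hSgdef]
      exact hPsum.hasSum.mul_left _
    exact tsum_of_norm_bounded hhs hbound
  calc ‖∑' z : Fin d → ℤ,
      if z = 0 then 0 else f (ℓ + (2 * N : ℝ) • B.mulVec fun j => (z j : ℝ))‖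
      ≤ K * (N : ℝ) ^ (-α) * Sg := htsum
    _ = K * Sg * (N : ℝ) ^ (-α) := by ring
    _ ≤ (K * Sg + 1) * (N : ℝ) ^ (-α) :=
        mul_le_mul_of_nonneg_right (by linarith [mul_nonneg hK0 hSg0])
          (Real.rpow_nonneg hN'.le _)
end

section
/- Discrete Poincaré inequality on the supercell: there is a constant C depending only on the lattice Λ = A·ℤ^d and the finite generating set 𝓡 ⊂ Λ (with span_ℤ(𝓡) = Λ) such that for every Λ_N-periodic function g : Λ → ℝ^m, ‖g − ⟨g⟩_{Λ_N}‖_{ℓ^∞(Λ_N)} ≤ C N ‖Dg‖_{ℓ^∞(Λ_N)}, where ⟨g⟩_{Λ_N} is the average of g over Λ_N and Dg(ℓ) = (g(ℓ+ρ) − g(ℓ))_{ρ∈𝓡}. -/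
open scoped BigOperators
open Matrix

private def latticeGroup (d : ℕ) (A : Matrix (Fin d) (Fin d) ℝ) : AddSubgroup (Fin d → ℝ) where
  carrier := {x | ∃ z : Fin d → ℤ, x = A.mulVec fun j => (z j : ℝ)}
  add_mem' := by
    rintro x y ⟨zx, rfl⟩ ⟨zy, rfl⟩
    refine ⟨zx + zy, ?_⟩
    have h : (fun j => ((zx + zy) j : ℝ)) = (fun j => (zx j : ℝ)) + fun j => (zy j : ℝ) := by
      funext j
      show ((zx j + zy j : ℤ) : ℝ) = (zx j : ℝ) + (zy j : ℝ)
      push_cast; rfl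
    rw [h, Matrix.mulVec_add]
  zero_mem' := ⟨0, by
    rw [show (fun j => (((0 : Fin d → ℤ)) j : ℝ)) = 0 from by funext j; simp, Matrix.mulVec_zero]⟩
  neg_mem' := by
    rintro x ⟨z, rfl⟩
    refine ⟨-z, ?_⟩
    have h : (fun j => ((-z) j : ℝ)) = -(fun j => (z j : ℝ)) := by
      funext j
      show ((-(z j) : ℤ) : ℝ) = -(z j : ℝ)
      push_cast; rfl
    rw [h, Matrix.mulVec_neg]

private lemma mem_latticeGroup {d : ℕ} {A : Matrix (Fin d) (Fin d) ℝ} {x : Fin d → ℝ} :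
    x ∈ latticeGroup d A ↔ ∃ z : Fin d → ℤ, x = A.mulVec fun j => (z j : ℝ) := Iff.rfl


private lemma aux_closure_step {V E : Type*} [AddCommGroup V] [SeminormedAddCommGroup E]
    (Λ' : AddSubgroup V) (R : Set V) (hR : R ⊆ (Λ' : Set V))
    {v : V} (hv : v ∈ AddSubgroup.closure R) :
    v ∈ Λ' ∧ ∃ K : ℕ, ∀ (g : V → E) (ε : ℝ), 0 ≤ ε →
      (∀ ρ ∈ R, ∀ x ∈ Λ', ‖g (x + ρ) - g x‖ ≤ ε) →
      ∀ x ∈ Λ', ‖g (x + v) - g x‖ ≤ (K : ℝ) * ε := by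
  induction hv using AddSubgroup.closure_induction with
  | mem ρ hρ =>
    exact ⟨hR hρ, 1, fun g ε hε hstep x hx => by simpa using hstep ρ hρ x hx⟩
  | zero =>
    exact ⟨Λ'.zero_mem, 0, fun g ε hε hstep x hx => by simp⟩
  | add a b ha hb iha ihb =>
    obtain ⟨haΛ, Ka, hKa⟩ := iha
    obtain ⟨hbΛ, Kb, hKb⟩ := ihb
    refine ⟨Λ'.add_mem haΛ hbΛ, Ka + Kb, fun g ε hε hstep x hx => ?_⟩
    have h1 : ‖g (x + a) - g x‖ ≤ (Ka : ℝ) * ε := hKa g ε hε hstep x hx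
    have h2 : ‖g ((x + a) + b) - g (x + a)‖ ≤ (Kb : ℝ) * ε :=
      hKb g ε hε hstep (x + a) (Λ'.add_mem hx haΛ)
    calc ‖g (x + (a + b)) - g x‖
        = ‖(g ((x + a) + b) - g (x + a)) + (g (x + a) - g x)‖ := by
          rw [← add_assoc]; abel_nf
      _ ≤ ‖g ((x + a) + b) - g (x + a)‖ + ‖g (x + a) - g x‖ := norm_add_le _ _
      _ ≤ (Kb : ℝ) * ε + (Ka : ℝ) * ε := add_le_add h2 h1
      _ = ((Ka + Kb : ℕ) : ℝ) * ε := by push_cast; ring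
  | neg a ha iha =>
    obtain ⟨haΛ, Ka, hKa⟩ := iha
    refine ⟨Λ'.neg_mem haΛ, Ka, fun g ε hε hstep x hx => ?_⟩
    have h1 : ‖g ((x + -a) + a) - g (x + -a)‖ ≤ (Ka : ℝ) * ε :=
      hKa g ε hε hstep (x + -a) (Λ'.add_mem hx (Λ'.neg_mem haΛ))
    have h2 : (x + -a) + a = x := by abel
    rw [h2] at h1
    rw [norm_sub_rev]
    exact h1

private lemma aux_zsmul {V E : Type*} [AddCommGroup V] [SeminormedAddCommGroup E]
    (Λ' : AddSubgroup V) (g : V → E) (v : V) (hv : v ∈ Λ') (c : ℝ) (hc : 0 ≤ c)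
    (h : ∀ x ∈ Λ', ‖g (x + v) - g x‖ ≤ c) :
    ∀ n : ℤ, ∀ x ∈ Λ', ‖g (x + n • v) - g x‖ ≤ (n.natAbs : ℝ) * c := by
  have key : ∀ k : ℕ, ∀ n : ℤ, n.natAbs = k → ∀ x ∈ Λ', ‖g (x + n • v) - g x‖ ≤ (k : ℝ) * c := by
    intro k
    induction k with
    | zero =>
      intro n hn x hx
      have : n = 0 := Int.natAbs_eq_zero.mp hn
      simp [this]
    | succ k ih =>
      intro n hn x hx
      rcases Int.natAbs_eq n with he | he
      · -- n = k+1 as a nat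
        have hk : n = (k : ℤ) + 1 := by omega
        have hne : n • v = ((k : ℤ) • v) + v := by rw [hk, add_smul, one_smul]
        have hmem : x + (k : ℤ) • v ∈ Λ' := Λ'.add_mem hx (Λ'.zsmul_mem hv _)
        have h1 : ‖g ((x + (k : ℤ) • v) + v) - g (x + (k : ℤ) • v)‖ ≤ c := h _ hmem
        have h2 : ‖g (x + (k : ℤ) • v) - g x‖ ≤ (k : ℝ) * c := ih (k : ℤ) (by simp) x hx
        calc ‖g (x + n • v) - g x‖
            = ‖(g ((x + (k : ℤ) • v) + v) - g (x + (k : ℤ) • v)) + (g (x + (k : ℤ) • v) - g x)‖ := by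
              rw [hne, ← add_assoc]; abel_nf
          _ ≤ _ + _ := norm_add_le _ _
          _ ≤ c + (k : ℝ) * c := add_le_add h1 h2
          _ = ((k + 1 : ℕ) : ℝ) * c := by push_cast; ring
      · -- n = -(k+1)
        have hk : n = -((k : ℤ) + 1) := by omega
        have hne : n • v = ((-(k : ℤ)) • v) + -v := by rw [hk]; rw [neg_add, add_smul]; simp
        have hmem : x + n • v ∈ Λ' := Λ'.add_mem hx (Λ'.zsmul_mem hv _)
        have h1 : ‖g ((x + n • v) + v) - g (x + n • v)‖ ≤ c := h _ hmem
        have h1' : ‖g (x + (-(k : ℤ)) • v) - g (x + n • v)‖ ≤ c := by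
          have : (x + n • v) + v = x + (-(k : ℤ)) • v := by
            rw [hne]; abel
          rwa [this] at h1
        have h2 : ‖g (x + (-(k : ℤ)) • v) - g x‖ ≤ (k : ℝ) * c := ih _ (by simp) x hx
        calc ‖g (x + n • v) - g x‖
            = ‖(g (x + n • v) - g (x + (-(k : ℤ)) • v)) + (g (x + (-(k : ℤ)) • v) - g x)‖ := by
              abel_nf
          _ ≤ _ + _ := norm_add_le _ _
          _ ≤ c + (k : ℝ) * c := add_le_add (by rw [norm_sub_rev]; exact h1') h2
          _ = ((k + 1 : ℕ) : ℝ) * c := by push_cast; ring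
  intro n x hx
  exact key n.natAbs n rfl x hx

private lemma aux_sum {ι V E : Type*} [AddCommGroup V] [SeminormedAddCommGroup E]
    [DecidableEq ι]
    (Λ' : AddSubgroup V) (g : V → E) (w : ι → V) (c : ι → ℝ)
    (hw : ∀ i, w i ∈ Λ')
    (h : ∀ i, ∀ x ∈ Λ', ‖g (x + w i) - g x‖ ≤ c i) :
    ∀ s : Finset ι, ∀ x ∈ Λ', ‖g (x + ∑ i ∈ s, w i) - g x‖ ≤ ∑ i ∈ s, c i := by
  intro s
  induction s using Finset.induction_on with
  | empty => intro x hx; simp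
  | insert a s ha ih =>
    intro x hx
    rw [Finset.sum_insert ha, Finset.sum_insert ha]
    have hmem : x + ∑ i ∈ s, w i ∈ Λ' := Λ'.add_mem hx (AddSubgroup.sum_mem _ fun i _ => hw i)
    have h1 : ‖g ((x + ∑ i ∈ s, w i) + w a) - g (x + ∑ i ∈ s, w i)‖ ≤ c a := h a _ hmem
    have h2 : ‖g (x + ∑ i ∈ s, w i) - g x‖ ≤ ∑ i ∈ s, c i := ih x hx
    calc ‖g (x + (w a + ∑ i ∈ s, w i)) - g x‖
        = ‖(g ((x + ∑ i ∈ s, w i) + w a) - g (x + ∑ i ∈ s, w i)) + (g (x + ∑ i ∈ s, w i) - g x)‖ := by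
          have : x + (w a + ∑ i ∈ s, w i) = (x + ∑ i ∈ s, w i) + w a := by abel
          rw [this]; abel_nf
      _ ≤ _ + _ := norm_add_le _ _
      _ ≤ c a + ∑ i ∈ s, c i := add_le_add h1 h2

/-- Discrete Poincaré inequality on the periodic supercell: there is a constant `C`,
depending only on the lattice `Λ = A·ℤ^d` and the finite generating set `R ⊂ Λ`, such
that for every `Λ_N`-periodic `g`, `‖g − ⟨g⟩_{Λ_N}‖_{ℓ^∞(Λ_N)} ≤ C·N·‖Dg‖_{ℓ^∞(Λ_N)}`. -/
theorem discrete_poincare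
    (d m : ℕ)
    (A B : Matrix (Fin d) (Fin d) ℝ) (hA : IsUnit A.det) (hB : IsUnit B.det)
    (T : Matrix (Fin d) (Fin d) ℤ) (hT : B = A * T.map (Int.cast : ℤ → ℝ))
    (R : Finset (Fin d → ℝ)) (hR0 : (0 : Fin d → ℝ) ∉ R)
    (hRlat : ∀ ρ ∈ R, ∃ z : Fin d → ℤ, ρ = A.mulVec fun j => (z j : ℝ))
    (hspan : ∀ z : Fin d → ℤ, (A.mulVec fun j => (z j : ℝ)) ∈
      AddSubgroup.closure (R : Set (Fin d → ℝ))) :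
    ∃ C : ℝ, 0 < C ∧ ∀ N : ℕ, 0 < N →
      ∀ g : (Fin d → ℝ) → EuclideanSpace ℝ (Fin m),
      (∀ (ℓ : Fin d → ℝ) (z : Fin d → ℤ),
        g (ℓ + (2 * N : ℝ) • B.mulVec fun j => (z j : ℝ)) = g ℓ) →
      ∀ LN : Finset (Fin d → ℝ),
      (∀ x, x ∈ LN ↔ ((∃ z : Fin d → ℤ, x = A.mulVec fun j => (z j : ℝ)) ∧
          ∀ j, -(N : ℝ) < B⁻¹.mulVec x j ∧ B⁻¹.mulVec x j ≤ N)) →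
      ∀ ε : ℝ, (∀ ℓ ∈ LN, Real.sqrt (∑ ρ ∈ R, ‖g (ℓ + ρ) - g ℓ‖ ^ 2) ≤ ε) →
      ∀ ℓ ∈ LN, ‖g ℓ - (LN.card : ℝ)⁻¹ • ∑ ℓ' ∈ LN, g ℓ'‖ ≤ C * N * ε := by
  classical
  set T' : Matrix (Fin d) (Fin d) ℝ := T.map (Int.cast : ℤ → ℝ) with hT'def
  have hTdet : IsUnit T'.det := by
    have hd : B.det = A.det * T'.det := by rw [hT, Matrix.det_mul]
    rw [hd] at hB
    exact (IsUnit.mul_iff.mp hB).2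
  set Λ' : AddSubgroup (Fin d → ℝ) := latticeGroup d A with hΛ'def
  have hRsub : (R : Set (Fin d → ℝ)) ⊆ (Λ' : Set (Fin d → ℝ)) := by
    intro ρ hρ
    exact mem_latticeGroup.mpr (hRlat ρ (Finset.mem_coe.mp hρ))
  -- step counts for the coordinate directions
  have hKex : ∀ i : Fin d, ∃ K : ℕ,
      ∀ (g : (Fin d → ℝ) → EuclideanSpace ℝ (Fin m)) (ε : ℝ), 0 ≤ ε →
      (∀ ρ ∈ (R : Set (Fin d → ℝ)), ∀ x ∈ Λ', ‖g (x + ρ) - g x‖ ≤ ε) →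
      ∀ x ∈ Λ',
        ‖g (x + A.mulVec fun j => ((Pi.single i 1 : Fin d → ℤ) j : ℝ)) - g x‖ ≤ (K : ℝ) * ε :=
    fun i => (aux_closure_step Λ' (R : Set (Fin d → ℝ)) hRsub (hspan (Pi.single i 1))).2
  choose K hK using hKex
  set M : ℝ := ∑ i, ∑ j, |(T i j : ℝ)| with hMdef
  set SK : ℝ := ∑ i, (K i : ℝ) with hSKdef
  have hM0 : 0 ≤ M := Finset.sum_nonneg fun i _ => Finset.sum_nonneg fun j _ => abs_nonneg _
  have hSK0 : 0 ≤ SK := Finset.sum_nonneg fun i _ => Nat.cast_nonneg _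
  refine ⟨2 * (M + 1) * (SK + 1), by positivity, ?_⟩
  intro N hN g hper LN hLN ε hε
  have hNR : (0 : ℝ) < N := by exact_mod_cast hN
  -- 0 ∈ LN
  have h0mem : (0 : Fin d → ℝ) ∈ LN := by
    rw [hLN]
    constructor
    · exact ⟨0, by
        rw [show (fun j => (((0 : Fin d → ℤ)) j : ℝ)) = 0 from by funext j; simp,
          Matrix.mulVec_zero]⟩
    · intro j
      rw [Matrix.mulVec_zero]
      constructor
      · simpa using hNR
      · simpa using hNR.le
  have hε0 : 0 ≤ ε := le_trans (Real.sqrt_nonneg _) (hε 0 h0mem)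
  -- matrix identities
  have hBinvB : ∀ w : Fin d → ℝ, B⁻¹.mulVec (B.mulVec w) = w := by
    intro w
    rw [Matrix.mulVec_mulVec, Matrix.nonsing_inv_mul B hB, Matrix.one_mulVec]
  have hTBA : T' * B⁻¹ * A = 1 := by
    rw [hT, Matrix.mul_inv_rev, ← mul_assoc, Matrix.mul_nonsing_inv T' hTdet, one_mul,
      Matrix.nonsing_inv_mul A hA]
  have hrecover : ∀ z : Fin d → ℤ,
      T'.mulVec (B⁻¹.mulVec (A.mulVec fun j => (z j : ℝ))) = fun j => (z j : ℝ) := by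
    intro z
    rw [Matrix.mulVec_mulVec, Matrix.mulVec_mulVec, hTBA, Matrix.one_mulVec]
  -- global step bound
  have hstep : ∀ ρ ∈ (R : Set (Fin d → ℝ)), ∀ x ∈ Λ', ‖g (x + ρ) - g x‖ ≤ ε := by
    intro ρ hρ x hx
    obtain ⟨z, rfl⟩ := mem_latticeGroup.mp hx
    set x : Fin d → ℝ := A.mulVec fun j => (z j : ℝ) with hxdef
    set v : Fin d → ℝ := B⁻¹.mulVec x with hvdef
    set w : Fin d → ℤ := fun j => ⌊((N : ℝ) - v j) / (2 * N)⌋ with hwdef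
    set x' : Fin d → ℝ := x + (2 * N : ℝ) • B.mulVec fun j => (w j : ℝ) with hx'def
    have h2N : (0 : ℝ) < 2 * N := by positivity
    have hb : ∀ j, -(N : ℝ) < v j + 2 * N * (w j) ∧ v j + 2 * N * (w j) ≤ N := by
      intro j
      have h1 : ((w j : ℝ)) ≤ ((N : ℝ) - v j) / (2 * N) := Int.floor_le _
      have h2 : ((N : ℝ) - v j) / (2 * N) - 1 < (w j : ℝ) := Int.sub_one_lt_floor _
      have h1' : (w j : ℝ) * (2 * N) ≤ (N : ℝ) - v j := (le_div_iff₀ h2N).mp h1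
      have h2' : (N : ℝ) - v j < ((w j : ℝ) + 1) * (2 * N) :=
        (div_lt_iff₀ h2N).mp (by linarith)
      constructor <;> nlinarith
    have hvx' : B⁻¹.mulVec x' = fun j => v j + 2 * N * (w j) := by
      rw [hx'def, Matrix.mulVec_add, Matrix.mulVec_smul, hBinvB]
      funext j
      simp only [Pi.add_apply, Pi.smul_apply, smul_eq_mul, hvdef]
    have hx'mem : x' ∈ LN := by
      rw [hLN]
      constructor
      · refine ⟨z + (2 * N : ℤ) • T.mulVec w, ?_⟩
        have hcastT : (fun j => ((T.mulVec w) j : ℝ)) = T'.mulVec fun j => (w j : ℝ) := by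
          funext j
          simp only [Matrix.mulVec, dotProduct, hT'def, Matrix.map_apply]
          push_cast
          rfl
        have hv1 : (fun j => ((z + (2 * N : ℤ) • T.mulVec w) j : ℝ)) =
            (fun j => (z j : ℝ)) + (2 * N : ℝ) • T'.mulVec fun j => (w j : ℝ) := by
          rw [← hcastT]
          funext j
          simp only [Pi.add_apply, Pi.smul_apply, smul_eq_mul]
          push_cast
          ring
        rw [hv1, Matrix.mulVec_add, Matrix.mulVec_smul, Matrix.mulVec_mulVec, ← hT, hx'def,
          hxdef]
      · intro j
        rw [hvx']
        exact hb j
    have hper1 : g x' = g x := hper x w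
    have hper2 : g (x' + ρ) = g (x + ρ) := by
      have he : x' + ρ = (x + ρ) + (2 * N : ℝ) • B.mulVec fun j => (w j : ℝ) := by
        rw [hx'def]; abel
      rw [he, hper (x + ρ) w]
    have hterm : ‖g (x' + ρ) - g x'‖ ≤ ε := by
      have h1 : ‖g (x' + ρ) - g x'‖ ^ 2 ≤ ∑ ρ' ∈ R, ‖g (x' + ρ') - g x'‖ ^ 2 :=
        Finset.single_le_sum (f := fun ρ' => ‖g (x' + ρ') - g x'‖ ^ 2)
          (fun i _ => sq_nonneg _) (Finset.mem_coe.mp hρ)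
      calc ‖g (x' + ρ) - g x'‖ = Real.sqrt (‖g (x' + ρ) - g x'‖ ^ 2) :=
            (Real.sqrt_sq (norm_nonneg _)).symm
        _ ≤ Real.sqrt (∑ ρ' ∈ R, ‖g (x' + ρ') - g x'‖ ^ 2) := Real.sqrt_le_sqrt h1
        _ ≤ ε := hε x' hx'mem
    rw [← hper1, ← hper2]
    exact hterm
  -- direction vectors
  set vι : Fin d → (Fin d → ℝ) :=
    fun i => A.mulVec fun j => ((Pi.single i 1 : Fin d → ℤ) j : ℝ) with hvιdef
  have hvmem : ∀ i, vι i ∈ Λ' := fun i => mem_latticeGroup.mpr ⟨Pi.single i 1, rfl⟩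
  have hKbound : ∀ i, ∀ x ∈ Λ', ‖g (x + vι i) - g x‖ ≤ (K i : ℝ) * ε :=
    fun i => hK i g ε hε0 hstep
  -- pointwise difference bound
  have hdiff : ∀ ℓ ∈ LN, ∀ ℓ' ∈ LN, ‖g ℓ - g ℓ'‖ ≤ 2 * (M + 1) * (SK + 1) * N * ε := by
    intro ℓ hℓ ℓ' hℓ'
    obtain ⟨⟨zl, hzl⟩, hbl⟩ := (hLN ℓ).mp hℓ
    obtain ⟨⟨zl', hzl'⟩, hbl'⟩ := (hLN ℓ').mp hℓ'
    set z : Fin d → ℤ := zl - zl' with hzdef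
    -- coordinate bound
    have hzeq : (fun j => (z j : ℝ)) = T'.mulVec (B⁻¹.mulVec ℓ - B⁻¹.mulVec ℓ') := by
      rw [Matrix.mulVec_sub, hzl, hzl', hrecover zl, hrecover zl']
      funext j
      show ((zl j - zl' j : ℤ) : ℝ) = (zl j : ℝ) - (zl' j : ℝ)
      push_cast; rfl
    have hwj : ∀ j, |B⁻¹.mulVec ℓ j - B⁻¹.mulVec ℓ' j| ≤ 2 * N := by
      intro j
      have h1 := hbl j
      have h2 := hbl' j
      rw [abs_le]
      constructor <;> linarith [h1.1, h1.2, h2.1, h2.2]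
    have hzbound : ∀ i, ((z i).natAbs : ℝ) ≤ 2 * N * M := by
      intro i
      have h1 : ((z i).natAbs : ℝ) = |(z i : ℝ)| := by
        rw [Nat.cast_natAbs, Int.cast_abs]
      rw [h1]
      have h2 : (z i : ℝ) = ∑ j, T' i j * (B⁻¹.mulVec ℓ j - B⁻¹.mulVec ℓ' j) := by
        have := congrFun hzeq i
        rw [this]
        simp [Matrix.mulVec, dotProduct]
      rw [h2]
      calc |∑ j, T' i j * (B⁻¹.mulVec ℓ j - B⁻¹.mulVec ℓ' j)|
          ≤ ∑ j, |T' i j * (B⁻¹.mulVec ℓ j - B⁻¹.mulVec ℓ' j)| :=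
            Finset.abs_sum_le_sum_abs _ _
        _ = ∑ j, |T' i j| * |B⁻¹.mulVec ℓ j - B⁻¹.mulVec ℓ' j| := by
            simp [abs_mul]
        _ ≤ ∑ j, |T' i j| * (2 * N) :=
            Finset.sum_le_sum fun j _ =>
              mul_le_mul_of_nonneg_left (hwj j) (abs_nonneg _)
        _ = 2 * N * ∑ j, |T' i j| := by rw [← Finset.sum_mul]; ring
        _ ≤ 2 * N * M := by
            refine mul_le_mul_of_nonneg_left ?_ (by positivity)
            rw [hMdef]
            refine Finset.single_le_sum (f := fun i => ∑ j, |(T i j : ℝ)|)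
              (fun i _ => Finset.sum_nonneg fun j _ => abs_nonneg _) (Finset.mem_univ i)
              |>.trans_eq' ?_
            simp [hT'def, Matrix.map_apply]
    -- telescoping
    have hw : ∀ i, (z i) • vι i ∈ Λ' := fun i => Λ'.zsmul_mem (hvmem i) _
    have hwb : ∀ i, ∀ x ∈ Λ', ‖g (x + (z i) • vι i) - g x‖ ≤ ((z i).natAbs : ℝ) * ((K i : ℝ) * ε) :=
      fun i => aux_zsmul Λ' g (vι i) (hvmem i) ((K i : ℝ) * ε) (by positivity) (hKbound i) (z i)
    have hℓ'Λ : ℓ' ∈ Λ' := mem_latticeGroup.mpr ⟨zl', hzl'⟩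
    have htel := aux_sum Λ' g (fun i => (z i) • vι i)
      (fun i => ((z i).natAbs : ℝ) * ((K i : ℝ) * ε)) hw hwb Finset.univ ℓ' hℓ'Λ
    have hsum : ℓ' + ∑ i, (z i) • vι i = ℓ := by
      have hd1 : ∑ i, (z i) • vι i = A.mulVec fun j => (z j : ℝ) := by
        have h1 : ∀ i, (z i) • vι i =
            A.mulVec ((z i : ℝ) • fun j => ((Pi.single i 1 : Fin d → ℤ) j : ℝ)) := by
          intro i
          rw [Matrix.mulVec_smul, Int.cast_smul_eq_zsmul]
        rw [Finset.sum_congr rfl fun i _ => h1 i]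
        have h2 : ∑ i, A.mulVec ((z i : ℝ) • fun j => ((Pi.single i 1 : Fin d → ℤ) j : ℝ)) =
            A.mulVec (∑ i, (z i : ℝ) • fun j => ((Pi.single i 1 : Fin d → ℤ) j : ℝ)) := by
          simp_rw [← Matrix.mulVecLin_apply]
          rw [map_sum]
        rw [h2]
        have h3 : (∑ i, (z i : ℝ) • fun j => ((Pi.single i 1 : Fin d → ℤ) j : ℝ)) =
            fun j => (z j : ℝ) := by
          funext j
          rw [Finset.sum_apply]
          have h4 : ∀ i, ((z i : ℝ) • fun j => ((Pi.single i 1 : Fin d → ℤ) j : ℝ)) j =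
              if j = i then (z i : ℝ) else 0 := by
            intro i
            by_cases h : j = i <;> simp [Pi.single_apply, h]
          rw [Finset.sum_congr rfl fun i _ => h4 i, Finset.sum_ite_eq]
          simp
        rw [h3]
      rw [hd1, hzl, hzl', ← Matrix.mulVec_add]
      have hv : ((fun j => (zl' j : ℝ)) + fun j => (z j : ℝ)) = fun j => (zl j : ℝ) := by
        funext j
        show (zl' j : ℝ) + ((zl j - zl' j : ℤ) : ℝ) = (zl j : ℝ)
        push_cast; ring
      rw [hv]
    rw [hsum] at htel
    have hnorm : ‖g ℓ - g ℓ'‖ ≤ ∑ i, ((z i).natAbs : ℝ) * ((K i : ℝ) * ε) := htel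
    calc ‖g ℓ - g ℓ'‖ ≤ ∑ i, ((z i).natAbs : ℝ) * ((K i : ℝ) * ε) := hnorm
      _ ≤ ∑ i, (2 * N * M) * ((K i : ℝ) * ε) :=
          Finset.sum_le_sum fun i _ =>
            mul_le_mul_of_nonneg_right (hzbound i) (by positivity)
      _ = 2 * N * M * (SK * ε) := by
          rw [← Finset.mul_sum, hSKdef, Finset.sum_mul]
      _ ≤ 2 * (M + 1) * (SK + 1) * N * ε := by
          nlinarith [mul_nonneg (mul_nonneg hNR.le hε0) hM0,
            mul_nonneg (mul_nonneg hNR.le hε0) hSK0, mul_nonneg hNR.le hε0]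
  -- averaging
  intro ℓ hℓ
  have hcardpos : 0 < LN.card := Finset.card_pos.mpr ⟨ℓ, hℓ⟩
  have hcardR : (0 : ℝ) < LN.card := by exact_mod_cast hcardpos
  have key : g ℓ - (LN.card : ℝ)⁻¹ • ∑ ℓ' ∈ LN, g ℓ' =
      (LN.card : ℝ)⁻¹ • ∑ ℓ' ∈ LN, (g ℓ - g ℓ') := by
    rw [Finset.sum_sub_distrib, Finset.sum_const, smul_sub]
    congr 1
    rw [← Nat.cast_smul_eq_nsmul ℝ, smul_smul, inv_mul_cancel₀ hcardR.ne', one_smul]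
  rw [key]
  have h1 : ‖∑ ℓ' ∈ LN, (g ℓ - g ℓ')‖ ≤ (LN.card : ℝ) * (2 * (M + 1) * (SK + 1) * N * ε) := by
    refine le_trans (norm_sum_le _ _) ?_
    calc ∑ ℓ' ∈ LN, ‖g ℓ - g ℓ'‖ ≤ ∑ _ℓ' ∈ LN, (2 * (M + 1) * (SK + 1) * N * ε) :=
          Finset.sum_le_sum fun ℓ' h => hdiff ℓ hℓ ℓ' h
      _ = (LN.card : ℝ) * (2 * (M + 1) * (SK + 1) * N * ε) := by
          rw [Finset.sum_const, nsmul_eq_mul]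
  calc ‖(LN.card : ℝ)⁻¹ • ∑ ℓ' ∈ LN, (g ℓ - g ℓ')‖
      = (LN.card : ℝ)⁻¹ * ‖∑ ℓ' ∈ LN, (g ℓ - g ℓ')‖ := by
        rw [norm_smul, norm_inv, Real.norm_natCast]
    _ ≤ (LN.card : ℝ)⁻¹ * ((LN.card : ℝ) * (2 * (M + 1) * (SK + 1) * N * ε)) :=
        mul_le_mul_of_nonneg_left h1 (by positivity)
    _ = 2 * (M + 1) * (SK + 1) * N * ε := by
        rw [← mul_assoc, inv_mul_cancel₀ hcardR.ne', one_mul]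
end

section
/- For all α ≥ β ≥ 0 and p > 0 there is a constant C such that for every m ∈ Λ, Σ_{ℓ ∈ Λ} (1+|ℓ|)^{−d−p} log^α(e+|ℓ|) · (1+|ℓ−m|)^{−d−p} log^β(e+|ℓ−m|) ≤ C (1+|m|)^{−d−p} log^α(e+|m|). -/
open scoped BigOperators
open Matrix

/-- The weight `|r|_{l^α}^{−q} = (1+r)^{−q} · log^α(e+r)`. -/
noncomputable def wt (α q r : ℝ) : ℝ :=
  (1 + r) ^ (-q) * Real.log (Real.exp 1 + r) ^ α

lemma log_e_add_ge_one {r : ℝ} (hr : 0 ≤ r) : 1 ≤ Real.log (Real.exp 1 + r) := by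
  have : Real.exp 1 ≤ Real.exp 1 + r := by linarith
  calc (1:ℝ) = Real.log (Real.exp 1) := (Real.log_exp 1).symm
  _ ≤ _ := Real.log_le_log (Real.exp_pos 1) this

lemma wt_pos {α q r : ℝ} (hr : 0 ≤ r) : 0 < wt α q r := by
  have h1 : (0:ℝ) < 1 + r := by linarith
  have h2 := log_e_add_ge_one hr
  exact mul_pos (Real.rpow_pos_of_pos h1 _) (Real.rpow_pos_of_pos (by linarith) _)

lemma wt_nonneg {α q r : ℝ} (hr : 0 ≤ r) : 0 ≤ wt α q r := (wt_pos hr).le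

lemma eunorm_nonneg {d : ℕ} (x : Fin d → ℝ) : 0 ≤ eunorm d x := norm_nonneg _

-- β ≤ α monotone in log exponent
lemma wt_mono_exp {α β q r : ℝ} (hr : 0 ≤ r) (hαβ : β ≤ α) : wt β q r ≤ wt α q r := by
  unfold wt
  exact mul_le_mul_of_nonneg_left
    (Real.rpow_le_rpow_of_exponent_le (log_e_add_ge_one hr) hαβ)
    (Real.rpow_nonneg (by linarith) _)

lemma log_poly_bound {α q : ℝ} (hα : 0 ≤ α) (hq : 0 < q) :
    ∃ M : ℝ, 1 ≤ M ∧ ∀ u : ℝ, 1 ≤ u → (1 + Real.log u) ^ α ≤ M * u ^ q := by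
  rcases eq_or_lt_of_le hα with h0 | h0
  · refine ⟨1, le_refl _, fun u hu => ?_⟩
    rw [← h0, Real.rpow_zero, one_mul]
    exact Real.one_le_rpow hu hq.le
  · set δ : ℝ := q / α with hδ
    have hδpos : 0 < δ := div_pos hq h0
    refine ⟨(1 + 1/δ) ^ α, ?_, fun u hu => ?_⟩
    · exact Real.one_le_rpow (by nlinarith [one_div_pos.mpr hδpos]) hα
    have hupos : (0:ℝ) < u := lt_of_lt_of_le one_pos hu
    have hlog : Real.log u ≤ u ^ δ / δ := by
      have h1 : Real.log (u ^ δ) ≤ u ^ δ - 1 :=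
        Real.log_le_sub_one_of_pos (Real.rpow_pos_of_pos hupos _)
      rw [Real.log_rpow hupos] at h1
      have : δ * Real.log u ≤ u ^ δ := by linarith
      calc Real.log u = δ * Real.log u / δ := by field_simp
      _ ≤ u ^ δ / δ := by gcongr
    have huδ : 1 ≤ u ^ δ := Real.one_le_rpow hu hδpos.le
    have key : 1 + Real.log u ≤ (1 + 1/δ) * u ^ δ := by
      have : u ^ δ / δ = (1/δ) * u ^ δ := by ring
      rw [this] at hlog
      nlinarith [one_div_pos.mpr hδpos]
    calc (1 + Real.log u) ^ α ≤ ((1 + 1/δ) * u ^ δ) ^ α := by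
          apply Real.rpow_le_rpow ?_ key hα
          have := Real.log_nonneg hu; linarith
    _ = (1 + 1/δ) ^ α * (u ^ δ) ^ α := by
          apply Real.mul_rpow (by positivity) (by positivity)
    _ = (1 + 1/δ) ^ α * u ^ q := by
          rw [← Real.rpow_mul hupos.le, hδ, div_mul_cancel₀ q (ne_of_gt h0)]

lemma wt_quasi_anti {α q : ℝ} (hα : 0 ≤ α) (hq : 0 < q) :
    ∃ M : ℝ, 1 ≤ M ∧ ∀ t r : ℝ, 0 ≤ t → 0 ≤ r → t ≤ 2 * r → wt α q r ≤ M * wt α q t := by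
  obtain ⟨M, hM1, hM⟩ := log_poly_bound hα hq
  refine ⟨(2:ℝ) ^ q * M, ?_, fun t r ht hr htr => ?_⟩
  · have h2 : (1:ℝ) ≤ (2:ℝ) ^ q := Real.one_le_rpow one_le_two hq.le
    nlinarith
  have h1t : (0:ℝ) < 1 + t := by linarith
  have h1r : (0:ℝ) < 1 + r := by linarith
  rcases le_total r t with hrt | htr'
  · -- r ≤ t ≤ 2r : wt r ≤ 2^q wt t
    have hbase : (1 + t) / 2 ≤ 1 + r := by linarith
    have h1 : (1 + r) ^ (-q) ≤ ((1 + t)/2) ^ (-q) :=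
      Real.rpow_le_rpow_of_nonpos (by linarith) hbase (by linarith)
    have h2 : ((1 + t)/2) ^ (-q) = (2:ℝ) ^ q * (1 + t) ^ (-q) := by
      rw [Real.div_rpow h1t.le (by norm_num : (0:ℝ) ≤ 2), Real.rpow_neg h1t.le,
        Real.rpow_neg (by norm_num : (0:ℝ) ≤ 2)]
      have h2q : ((2:ℝ) ^ q) ≠ 0 := by positivity
      field_simp
    have h3 : Real.log (Real.exp 1 + r) ^ α ≤ Real.log (Real.exp 1 + t) ^ α :=
      Real.rpow_le_rpow (by linarith [log_e_add_ge_one hr])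
        (Real.log_le_log (by positivity) (by linarith)) hα
    calc wt α q r ≤ ((1 + t)/2) ^ (-q) * Real.log (Real.exp 1 + t) ^ α := by
          apply mul_le_mul h1 h3
            (Real.rpow_nonneg (by linarith [log_e_add_ge_one hr]) _) (by positivity)
    _ = (2:ℝ) ^ q * wt α q t := by rw [h2]; unfold wt; ring
    _ ≤ (2:ℝ) ^ q * M * wt α q t := by
          have h2q : (0:ℝ) < (2:ℝ)^q := by positivity
          exact mul_le_mul_of_nonneg_right (le_mul_of_one_le_right h2q.le hM1) (wt_nonneg ht)
  · -- t ≤ r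
    set u : ℝ := (1 + r) / (1 + t) with hu
    have hu1 : 1 ≤ u := (one_le_div h1t).mpr (by linarith)
    have hupos : 0 < u := lt_of_lt_of_le one_pos hu1
    have hru : 1 + r = (1 + t) * u := by
      rw [hu, mul_div_assoc', mul_comm, mul_div_assoc, div_self h1t.ne', mul_one]
    have hlogle : Real.log (Real.exp 1 + r) ≤ Real.log (Real.exp 1 + t) * (1 + Real.log u) := by
      have hft : (0:ℝ) < Real.exp 1 + t := by positivity
      have hfr : (0:ℝ) < Real.exp 1 + r := by positivity
      have hdiv : (Real.exp 1 + r) / (Real.exp 1 + t) ≤ u := by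
        rw [div_le_iff₀ hft, hu, div_mul_eq_mul_div, le_div_iff₀ h1t]
        have he1 : (1:ℝ) ≤ Real.exp 1 := by
          have := Real.add_one_le_exp (1:ℝ); linarith
        nlinarith
      have h4 : Real.log (Real.exp 1 + r) - Real.log (Real.exp 1 + t) ≤ Real.log u := by
        rw [← Real.log_div (ne_of_gt hfr) (ne_of_gt hft)]
        exact Real.log_le_log (by positivity) hdiv
      have h5 := log_e_add_ge_one ht
      have h6 := Real.log_nonneg hu1
      nlinarith
    have hlogr0 : (0:ℝ) ≤ Real.log (Real.exp 1 + r) := by linarith [log_e_add_ge_one hr]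
    have hstep1 : Real.log (Real.exp 1 + r) ^ α ≤
        Real.log (Real.exp 1 + t) ^ α * (1 + Real.log u) ^ α := by
      rw [← Real.mul_rpow (by linarith [log_e_add_ge_one ht]) (by linarith [Real.log_nonneg hu1])]
      exact Real.rpow_le_rpow hlogr0 hlogle hα
    have hstep2 : (1 + r) ^ (-q) = (1 + t) ^ (-q) * u ^ (-q) := by
      rw [hru, Real.mul_rpow h1t.le hupos.le]
    have hstep3 : u ^ (-q) * (1 + Real.log u) ^ α ≤ M := by
      have h7 := hM u hu1
      have h8 : u ^ (-q) = (u ^ q)⁻¹ := Real.rpow_neg hupos.le q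
      have h9 : (0:ℝ) < u ^ q := Real.rpow_pos_of_pos hupos q
      rw [h8]
      rw [inv_mul_le_iff₀ h9]
      linarith [h7]
    have hqnn : (0:ℝ) ≤ (1 + t) ^ (-q) * u ^ (-q) := by positivity
    calc wt α q r = (1 + t) ^ (-q) * u ^ (-q) * Real.log (Real.exp 1 + r) ^ α := by
            unfold wt; rw [hstep2]
    _ ≤ (1 + t) ^ (-q) * u ^ (-q) *
          (Real.log (Real.exp 1 + t) ^ α * (1 + Real.log u) ^ α) :=
          mul_le_mul_of_nonneg_left hstep1 hqnn
    _ = ((1 + t) ^ (-q) * Real.log (Real.exp 1 + t) ^ α) *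
          (u ^ (-q) * (1 + Real.log u) ^ α) := by ring
    _ ≤ wt α q t * M := mul_le_mul_of_nonneg_left hstep3 (wt_nonneg ht)
    _ ≤ (2:ℝ) ^ q * M * wt α q t := by
          have h2 : (1:ℝ) ≤ (2:ℝ) ^ q := Real.one_le_rpow one_le_two hq.le
          have hnn : 0 ≤ M * wt α q t := mul_nonneg (by linarith) (wt_nonneg ht)
          calc wt α q t * M = M * wt α q t := mul_comm _ _
          _ ≤ (2:ℝ)^q * (M * wt α q t) := le_mul_of_one_le_left hnn h2
          _ = (2:ℝ)^q * M * wt α q t := by ring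

lemma wt_le_rpow {α q ε : ℝ} (hα : 0 ≤ α) (hε : 0 < ε) :
    ∃ C : ℝ, 0 < C ∧ ∀ r : ℝ, 0 ≤ r → wt α q r ≤ C * (1 + r) ^ (-(q - ε)) := by
  obtain ⟨M, hM1, hM⟩ := log_poly_bound hα hε
  refine ⟨M, by linarith, fun r hr => ?_⟩
  have h1r : (0:ℝ) < 1 + r := by linarith
  have hlog : Real.log (Real.exp 1 + r) ≤ 1 + Real.log (1 + r) := by
    have he : Real.exp 1 + r ≤ Real.exp 1 * (1 + r) := by
      have he1 : (1:ℝ) ≤ Real.exp 1 := by have := Real.add_one_le_exp (1:ℝ); linarith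
      nlinarith
    calc Real.log (Real.exp 1 + r) ≤ Real.log (Real.exp 1 * (1 + r)) :=
          Real.log_le_log (by positivity) he
    _ = 1 + Real.log (1 + r) := by
          rw [Real.log_mul (by positivity) (ne_of_gt h1r), Real.log_exp]
  have hstep : Real.log (Real.exp 1 + r) ^ α ≤ M * (1 + r) ^ ε := by
    calc Real.log (Real.exp 1 + r) ^ α ≤ (1 + Real.log (1 + r)) ^ α :=
          Real.rpow_le_rpow (by linarith [log_e_add_ge_one hr]) hlog hα
    _ ≤ M * (1 + r) ^ ε := hM (1 + r) (by linarith)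
  calc wt α q r ≤ (1 + r) ^ (-q) * (M * (1 + r) ^ ε) :=
        mul_le_mul_of_nonneg_left hstep (by positivity)
  _ = M * ((1 + r) ^ (-q) * (1 + r) ^ ε) := by ring
  _ = M * (1 + r) ^ (-(q - ε)) := by
        rw [← Real.rpow_add h1r]; ring_nf

lemma eunorm_tri {d : ℕ} (a b : Fin d → ℝ) : eunorm d a ≤ eunorm d b + eunorm d (a - b) := by
  unfold eunorm
  have : (WithLp.equiv 2 (Fin d → ℝ)).symm a =
      (WithLp.equiv 2 (Fin d → ℝ)).symm b + (WithLp.equiv 2 (Fin d → ℝ)).symm (a - b) := by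
    simp
  rw [this]
  exact norm_add_le _ _

lemma mulVec_eunorm_bound {d : ℕ} (B : Matrix (Fin d) (Fin d) ℝ) :
    ∃ K : ℝ, 0 < K ∧ ∀ v : Fin d → ℝ, eunorm d (B.mulVec v) ≤ K * eunorm d v := by
  let L := LinearMap.toContinuousLinearMap (Matrix.toEuclideanLin B)
  refine ⟨‖L‖ + 1, by positivity, fun v => ?_⟩
  have h1 : eunorm d (B.mulVec v) = ‖L ((WithLp.equiv 2 (Fin d → ℝ)).symm v)‖ := by
    unfold eunorm
    congr 1
  rw [h1]
  calc ‖L ((WithLp.equiv 2 (Fin d → ℝ)).symm v)‖ ≤ ‖L‖ * ‖(WithLp.equiv 2 (Fin d → ℝ)).symm v‖ :=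
        L.le_opNorm _
  _ ≤ (‖L‖ + 1) * eunorm d v := by
        unfold eunorm; nlinarith [norm_nonneg ((WithLp.equiv 2 (Fin d → ℝ)).symm v), norm_nonneg L]

lemma mulVec_eunorm_lower {d : ℕ} (A : Matrix (Fin d) (Fin d) ℝ) (hA : IsUnit A.det) :
    ∃ c : ℝ, 0 < c ∧ ∀ v : Fin d → ℝ, c * eunorm d v ≤ eunorm d (A.mulVec v) := by
  obtain ⟨K, hK, hKb⟩ := mulVec_eunorm_bound A⁻¹
  refine ⟨K⁻¹, by positivity, fun v => ?_⟩
  have h1 : A⁻¹.mulVec (A.mulVec v) = v := by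
    rw [Matrix.mulVec_mulVec, Matrix.nonsing_inv_mul A hA, Matrix.one_mulVec]
  have h2 := hKb (A.mulVec v)
  rw [h1] at h2
  rw [inv_mul_le_iff₀ hK] at *
  linarith [h2]

lemma tsum_pi_prod (F : ℤ → ENNReal) :
    ∀ n : ℕ, ∑' z : Fin n → ℤ, ∏ j, F (z j) = (∑' k : ℤ, F k) ^ n := by
  intro n
  induction n with
  | zero =>
      haveI : Unique (Fin 0 → ℤ) := ⟨⟨fun i => i.elim0⟩, fun a => funext fun i => i.elim0⟩
      rw [tsum_eq_single (default : Fin 0 → ℤ) (fun b hb => absurd (Subsingleton.elim b default) hb)]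
      simp
  | succ n ih =>
      let e : ℤ × (Fin n → ℤ) ≃ (Fin (n+1) → ℤ) := Fin.consEquiv (fun _ => ℤ)
      rw [← Equiv.tsum_eq e (fun z => ∏ j, F (z j))]
      have hterm : ∀ p : ℤ × (Fin n → ℤ),
          (∏ j, F ((e p) j)) = F p.1 * ∏ j : Fin n, F (p.2 j) := by
        intro p
        rw [Fin.prod_univ_succ]
        simp [e, Fin.consEquiv]
      calc ∑' p : ℤ × (Fin n → ℤ), ∏ j, F ((e p) j)
          = ∑' p : ℤ × (Fin n → ℤ), F p.1 * ∏ j : Fin n, F (p.2 j) := tsum_congr hterm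
      _ = ∑' (a : ℤ) (b : Fin n → ℤ), F a * ∏ j : Fin n, F (b j) := ENNReal.tsum_prod (f := fun (a : ℤ) (b : Fin n → ℤ) => F a * ∏ j : Fin n, F (b j))
      _ = (∑' k : ℤ, F k) * ∑' b : Fin n → ℤ, ∏ j : Fin n, F (b j) := by
            rw [← ENNReal.tsum_mul_right]
            exact tsum_congr fun a => ENNReal.tsum_mul_left
      _ = (∑' k : ℤ, F k) ^ (n + 1) := by rw [ih, pow_succ]; ring

lemma tsum_int_rpow {t : ℝ} (ht : 1 < t) :
    ∃ S : ℝ, ∑' k : ℤ, ENNReal.ofReal ((1 + |(k : ℝ)|) ^ (-t)) = ENNReal.ofReal S := by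
  have hsum0 : Summable (fun k : ℤ => 1 / |(k : ℝ) + 1/2| ^ t) :=
    (Real.summable_one_div_int_add_rpow (1/2) t).mpr ht
  have hsum : Summable (fun k : ℤ => (1 + |(k : ℝ)|) ^ (-t)) := by
    apply Summable.of_nonneg_of_le (fun k => by positivity) (fun k => ?_) hsum0
    have h2 : (1:ℤ) ≤ |2 * k + 1| := Int.one_le_abs (by omega)
    have h3 : (1:ℝ) ≤ |2 * (k:ℝ) + 1| := by exact_mod_cast h2
    have h1 : (1:ℝ)/2 ≤ |(k : ℝ) + 1/2| := by
      have : (k:ℝ) + 1/2 = (2 * (k:ℝ) + 1)/2 := by ring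
      rw [this, abs_div, abs_of_pos (by norm_num : (0:ℝ) < 2)]
      linarith
    have h4 : (0:ℝ) < |(k : ℝ) + 1/2| := by linarith
    have h5 : |(k : ℝ) + 1/2| ≤ 1 + |(k : ℝ)| := by
      calc |(k : ℝ) + 1/2| ≤ |(k:ℝ)| + |(1:ℝ)/2| := abs_add_le _ _
      _ ≤ 1 + |(k : ℝ)| := by rw [abs_of_pos (by norm_num : (0:ℝ) < 1/2)]; linarith
    rw [Real.rpow_neg (by positivity), one_div]
    exact inv_anti₀ (Real.rpow_pos_of_pos h4 t) (Real.rpow_le_rpow h4.le h5 (by linarith))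
  refine ⟨∑' k : ℤ, (1 + |(k : ℝ)|) ^ (-t), ?_⟩
  rw [ENNReal.ofReal_tsum_of_nonneg (fun k => by positivity) hsum]

lemma tsum_lattice_rpow (d : ℕ) {s : ℝ} (hs : (d:ℝ) < s) :
    ∃ S : ℝ, 0 ≤ S ∧
      ∑' z : Fin d → ℤ, ENNReal.ofReal ((1 + eunorm d (fun j => (z j : ℝ))) ^ (-s))
        ≤ ENNReal.ofReal S := by
  rcases Nat.eq_zero_or_pos d with hd | hd
  · subst hd
    refine ⟨1, by norm_num, ?_⟩
    haveI : Unique (Fin 0 → ℤ) := ⟨⟨fun i => i.elim0⟩, fun a => funext fun i => i.elim0⟩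
    rw [tsum_eq_single (default : Fin 0 → ℤ) (fun b hb => absurd (Subsingleton.elim b default) hb)]
    apply ENNReal.ofReal_le_ofReal
    have h0 : eunorm 0 (fun j => ((default : Fin 0 → ℤ) j : ℝ)) = 0 := by
      unfold eunorm
      haveI : Subsingleton (WithLp 2 (Fin 0 → ℝ)) := (WithLp.equiv 2 (Fin 0 → ℝ)).subsingleton
      rw [Subsingleton.elim ((WithLp.equiv 2 (Fin 0 → ℝ)).symm _) 0, norm_zero]
    rw [h0, add_zero, Real.one_rpow]
  · set t : ℝ := s / d with hts
    have hdpos : (0:ℝ) < d := by exact_mod_cast hd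
    have ht : 1 < t := (lt_div_iff₀ hdpos).mpr (by linarith)
    obtain ⟨S₁, hS₁⟩ := tsum_int_rpow ht
    refine ⟨(max S₁ 0) ^ d, by positivity, ?_⟩
    have hptwise : ∀ z : Fin d → ℤ,
        ENNReal.ofReal ((1 + eunorm d (fun j => (z j : ℝ))) ^ (-s))
          ≤ ∏ j : Fin d, ENNReal.ofReal ((1 + |((z j : ℤ) : ℝ)|) ^ (-t)) := by
      intro z
      rw [← ENNReal.ofReal_prod_of_nonneg (fun i _ => by positivity)]
      apply ENNReal.ofReal_le_ofReal
      have hN : 0 ≤ eunorm d (fun j => (z j : ℝ)) := eunorm_nonneg _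
      have key : (1 + eunorm d (fun j => (z j : ℝ))) ^ (-s)
          = ∏ j : Fin d, (1 + eunorm d (fun j => (z j : ℝ))) ^ (-t) := by
        rw [Finset.prod_const, Finset.card_univ, Fintype.card_fin,
          ← Real.rpow_natCast ((1 + eunorm d fun j => (z j:ℝ)) ^ (-t)) d,
          ← Real.rpow_mul (by linarith)]
        congr 1
        field_simp [hts]
        rw [hts, div_mul_cancel₀ s hdpos.ne']
      rw [key]
      apply Finset.prod_le_prod (fun i _ => by positivity)
      intro i _
      exact Real.rpow_le_rpow_of_nonpos (by positivity)
        (by linarith [coord_le_eunorm (fun j => ((z j : ℤ) : ℝ)) i]) (by linarith)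
    calc ∑' z : Fin d → ℤ, ENNReal.ofReal ((1 + eunorm d (fun j => (z j : ℝ))) ^ (-s))
        ≤ ∑' z : Fin d → ℤ, ∏ j : Fin d, ENNReal.ofReal ((1 + |((z j : ℤ) : ℝ)|) ^ (-t)) :=
          ENNReal.tsum_le_tsum hptwise
    _ = (∑' k : ℤ, ENNReal.ofReal ((1 + |(k : ℝ)|) ^ (-t))) ^ d :=
          tsum_pi_prod (fun k => ENNReal.ofReal ((1 + |(k : ℝ)|) ^ (-t))) d
    _ ≤ ENNReal.ofReal ((max S₁ 0) ^ d) := by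
          rw [hS₁, ENNReal.ofReal_pow (le_max_right S₁ 0)]
          apply pow_le_pow_left' (ENNReal.ofReal_le_ofReal (le_max_left _ _))

lemma tsum_wt_bound (d : ℕ) (A : Matrix (Fin d) (Fin d) ℝ) (hA : IsUnit A.det)
    {α p : ℝ} (hα : 0 ≤ α) (hp : 0 < p) :
    ∃ T : ℝ, 0 ≤ T ∧
      ∑' z : Fin d → ℤ,
          ENNReal.ofReal (wt α (d + p) (eunorm d (A.mulVec fun j => (z j : ℝ))))
        ≤ ENNReal.ofReal T := by
  obtain ⟨C₂, hC₂, hC₂b⟩ := wt_le_rpow (q := (d:ℝ) + p) hα (half_pos hp)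
  obtain ⟨c, hc, hcb⟩ := mulVec_eunorm_lower A hA
  set s : ℝ := (d:ℝ) + p/2 with hs_def
  have hds : (d:ℝ) < s := by simp [hs_def]; linarith
  obtain ⟨S, hSnn, hSb⟩ := tsum_lattice_rpow d hds
  set c' : ℝ := min c 1 with hc'_def
  have hc'pos : 0 < c' := lt_min hc one_pos
  have hc'le1 : c' ≤ 1 := min_le_right _ _
  have hc'lec : c' ≤ c := min_le_left _ _
  set K : ℝ := C₂ * c' ^ (-s) with hK_def
  have hKpos : 0 < K := mul_pos hC₂ (Real.rpow_pos_of_pos hc'pos _)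
  refine ⟨K * S, by positivity, ?_⟩
  have hpt : ∀ z : Fin d → ℤ,
      wt α ((d:ℝ) + p) (eunorm d (A.mulVec fun j => (z j : ℝ)))
        ≤ K * (1 + eunorm d (fun j => (z j : ℝ))) ^ (-s) := by
    intro z
    set v : Fin d → ℝ := fun j => (z j : ℝ) with hv
    have hNv : 0 ≤ eunorm d v := eunorm_nonneg _
    have hNAv : 0 ≤ eunorm d (A.mulVec v) := eunorm_nonneg _
    have h1 : wt α ((d:ℝ) + p) (eunorm d (A.mulVec v))
        ≤ C₂ * (1 + eunorm d (A.mulVec v)) ^ (-s) := by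
      have := hC₂b (eunorm d (A.mulVec v)) hNAv
      have hss : ((d:ℝ) + p - p/2) = s := by rw [hs_def]; ring
      rwa [hss] at this
    have h2 : c' * (1 + eunorm d v) ≤ 1 + eunorm d (A.mulVec v) := by
      have h3 := hcb v
      have h4 : c' * eunorm d v ≤ c * eunorm d v :=
        mul_le_mul_of_nonneg_right hc'lec hNv
      nlinarith
    have h5 : (1 + eunorm d (A.mulVec v)) ^ (-s) ≤ (c' * (1 + eunorm d v)) ^ (-s) :=
      Real.rpow_le_rpow_of_nonpos (by positivity) h2 (by linarith)
    have h6 : (c' * (1 + eunorm d v)) ^ (-s) = c' ^ (-s) * (1 + eunorm d v) ^ (-s) :=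
      Real.mul_rpow hc'pos.le (by linarith)
    calc wt α ((d:ℝ) + p) (eunorm d (A.mulVec v))
        ≤ C₂ * (1 + eunorm d (A.mulVec v)) ^ (-s) := h1
    _ ≤ C₂ * (c' ^ (-s) * (1 + eunorm d v) ^ (-s)) := by
        rw [← h6]; exact mul_le_mul_of_nonneg_left h5 hC₂.le
    _ = K * (1 + eunorm d v) ^ (-s) := by rw [hK_def]; ring
  calc ∑' z : Fin d → ℤ,
        ENNReal.ofReal (wt α ((d:ℝ) + p) (eunorm d (A.mulVec fun j => (z j : ℝ))))
      ≤ ∑' z : Fin d → ℤ,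
          ENNReal.ofReal K * ENNReal.ofReal ((1 + eunorm d (fun j => (z j : ℝ))) ^ (-s)) := by
        apply ENNReal.tsum_le_tsum
        intro z
        rw [← ENNReal.ofReal_mul hKpos.le]
        exact ENNReal.ofReal_le_ofReal (hpt z)
  _ = ENNReal.ofReal K * ∑' z : Fin d → ℤ,
        ENNReal.ofReal ((1 + eunorm d (fun j => (z j : ℝ))) ^ (-s)) := ENNReal.tsum_mul_left
  _ ≤ ENNReal.ofReal K * ENNReal.ofReal S := mul_le_mul_right hSb _
  _ = ENNReal.ofReal (K * S) := (ENNReal.ofReal_mul hKpos.le).symm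

lemma eunorm_sub_rev {d : ℕ} (a b : Fin d → ℝ) : eunorm d (a - b) = eunorm d (b - a) := by
  unfold eunorm
  have h : (WithLp.equiv 2 (Fin d → ℝ)).symm (a - b) =
      (WithLp.equiv 2 (Fin d → ℝ)).symm a - (WithLp.equiv 2 (Fin d → ℝ)).symm b := by simp
  have h' : (WithLp.equiv 2 (Fin d → ℝ)).symm (b - a) =
      (WithLp.equiv 2 (Fin d → ℝ)).symm b - (WithLp.equiv 2 (Fin d → ℝ)).symm a := by simp
  rw [h, h', norm_sub_rev]

/-- Supercritical discrete convolution bound: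
`Σ_{ℓ ∈ Λ} |ℓ|_{l^α}^{−d−p} |ℓ−m|_{l^β}^{−d−p} ≤ C·|m|_{l^α}^{−d−p}`
for `α ≥ β ≥ 0` and `p > 0`, uniformly in `m ∈ Λ`. -/
theorem lattice_convolution_bound_supercritical
    (d : ℕ) (A : Matrix (Fin d) (Fin d) ℝ) (hA : IsUnit A.det)
    (α β p : ℝ) (hβ : 0 ≤ β) (hαβ : β ≤ α) (hp : 0 < p) :
    ∃ C : ℝ, 0 < C ∧ ∀ zm : Fin d → ℤ,
      (∑' z : Fin d → ℤ, ENNReal.ofReal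
          (wt α (d + p) (eunorm d (A.mulVec fun j => (z j : ℝ))) *
            wt β (d + p)
              (eunorm d ((A.mulVec fun j => (z j : ℝ)) - A.mulVec fun j => (zm j : ℝ)))))
        ≤ ENNReal.ofReal (C * wt α (d + p) (eunorm d (A.mulVec fun j => (zm j : ℝ)))) := by
  have hα : 0 ≤ α := le_trans hβ hαβ
  have hq : (0:ℝ) < (d:ℝ) + p := by positivity
  obtain ⟨M, hM1, hMb⟩ := wt_quasi_anti hα hq
  obtain ⟨T, hT0, hTb⟩ := tsum_wt_bound d A hA hα hp
  refine ⟨2 * M * T + 1, by nlinarith, fun m => ?_⟩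
  set q : ℝ := (d:ℝ) + p with hq_def
  set h : ℝ := wt α q (eunorm d (A.mulVec fun j => (m j : ℝ))) with hh_def
  have hh0 : 0 ≤ h := wt_nonneg (eunorm_nonneg _)
  -- pointwise bound
  have hpt : ∀ z : Fin d → ℤ,
      wt α q (eunorm d (A.mulVec fun j => (z j : ℝ))) *
        wt β q (eunorm d ((A.mulVec fun j => (z j : ℝ)) - A.mulVec fun j => (m j : ℝ)))
      ≤ M * h * (wt α q (eunorm d (A.mulVec fun j => (z j : ℝ))) +
          wt α q (eunorm d ((A.mulVec fun j => (z j : ℝ)) - A.mulVec fun j => (m j : ℝ)))) := by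
    intro z
    set r₁ : ℝ := eunorm d (A.mulVec fun j => (z j : ℝ)) with hr₁
    set r₂ : ℝ := eunorm d ((A.mulVec fun j => (z j : ℝ)) - A.mulVec fun j => (m j : ℝ)) with hr₂
    have hr₁0 : 0 ≤ r₁ := eunorm_nonneg _
    have hr₂0 : 0 ≤ r₂ := eunorm_nonneg _
    have hR0 : 0 ≤ eunorm d (A.mulVec fun j => (m j : ℝ)) := eunorm_nonneg _
    have htri : eunorm d (A.mulVec fun j => (m j : ℝ)) ≤ r₁ + r₂ := by
      have h1 := eunorm_tri (A.mulVec fun j => (m j : ℝ)) (A.mulVec fun j => (z j : ℝ))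
      rwa [eunorm_sub_rev, ← hr₂] at h1
    have hP0 : 0 ≤ wt α q r₁ := wt_nonneg hr₁0
    have hG0 : 0 ≤ wt β q r₂ := wt_nonneg hr₂0
    have hGα : wt β q r₂ ≤ wt α q r₂ := wt_mono_exp hr₂0 hαβ
    have hGα0 : 0 ≤ wt α q r₂ := wt_nonneg hr₂0
    rcases le_total r₁ r₂ with hcase | hcase
    · -- r₂ large: wt α q r₂ ≤ M h
      have h2 : wt α q r₂ ≤ M * h := hMb _ _ hR0 hr₂0 (by linarith)
      calc wt α q r₁ * wt β q r₂ ≤ wt α q r₁ * wt α q r₂ :=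
            mul_le_mul_of_nonneg_left hGα hP0
      _ ≤ wt α q r₁ * (M * h) := mul_le_mul_of_nonneg_left h2 hP0
      _ = M * h * wt α q r₁ := by ring
      _ ≤ M * h * (wt α q r₁ + wt α q r₂) := by nlinarith
    · -- r₁ large: wt α q r₁ ≤ M h
      have h2 : wt α q r₁ ≤ M * h := hMb _ _ hR0 hr₁0 (by linarith)
      calc wt α q r₁ * wt β q r₂ ≤ M * h * wt β q r₂ :=
            mul_le_mul_of_nonneg_right h2 hG0
      _ ≤ M * h * wt α q r₂ := by
            apply mul_le_mul_of_nonneg_left hGα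
            nlinarith
      _ ≤ M * h * (wt α q r₁ + wt α q r₂) := by nlinarith
  have hMh0 : 0 ≤ M * h := by nlinarith
  -- the two sums
  have hsum1 : ∑' z : Fin d → ℤ,
      ENNReal.ofReal (wt α q (eunorm d (A.mulVec fun j => (z j : ℝ)))) ≤ ENNReal.ofReal T := hTb
  have hsum2 : ∑' z : Fin d → ℤ,
      ENNReal.ofReal (wt α q
        (eunorm d ((A.mulVec fun j => (z j : ℝ)) - A.mulVec fun j => (m j : ℝ))))
      ≤ ENNReal.ofReal T := by
    have hrw : ∀ z : Fin d → ℤ,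
        (A.mulVec fun j => (z j : ℝ)) - (A.mulVec fun j => (m j : ℝ))
          = A.mulVec fun j => (((z - m) j : ℤ) : ℝ) := by
      intro z
      have hcast : (fun j => (((z - m) j : ℤ) : ℝ))
          = (fun j => (z j : ℝ)) - fun j => (m j : ℝ) := by
        funext j
        simp [Pi.sub_apply]
      rw [hcast, Matrix.mulVec_sub]
    calc ∑' z : Fin d → ℤ,
        ENNReal.ofReal (wt α q
          (eunorm d ((A.mulVec fun j => (z j : ℝ)) - A.mulVec fun j => (m j : ℝ))))
        = ∑' z : Fin d → ℤ,
          ENNReal.ofReal (wt α q (eunorm d (A.mulVec fun j => (((z - m) j : ℤ) : ℝ)))) := by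
          exact tsum_congr fun z => by rw [hrw z]
    _ = ∑' w : Fin d → ℤ,
          ENNReal.ofReal (wt α q (eunorm d (A.mulVec fun j => ((w j : ℤ) : ℝ)))) := by
          exact Equiv.tsum_eq (Equiv.subRight m)
            (fun w => ENNReal.ofReal (wt α q (eunorm d (A.mulVec fun j => ((w j : ℤ) : ℝ)))))
    _ ≤ ENNReal.ofReal T := hTb
  calc (∑' z : Fin d → ℤ, ENNReal.ofReal
          (wt α q (eunorm d (A.mulVec fun j => (z j : ℝ))) *
            wt β q (eunorm d ((A.mulVec fun j => (z j : ℝ)) - A.mulVec fun j => (m j : ℝ)))))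
      ≤ ∑' z : Fin d → ℤ, ENNReal.ofReal (M * h) *
          (ENNReal.ofReal (wt α q (eunorm d (A.mulVec fun j => (z j : ℝ)))) +
            ENNReal.ofReal (wt α q
              (eunorm d ((A.mulVec fun j => (z j : ℝ)) - A.mulVec fun j => (m j : ℝ))))) := by
        apply ENNReal.tsum_le_tsum
        intro z
        rw [← ENNReal.ofReal_add (wt_nonneg (eunorm_nonneg _)) (wt_nonneg (eunorm_nonneg _)),
          ← ENNReal.ofReal_mul hMh0]
        exact ENNReal.ofReal_le_ofReal (hpt z)
  _ = ENNReal.ofReal (M * h) *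
        ((∑' z : Fin d → ℤ,
            ENNReal.ofReal (wt α q (eunorm d (A.mulVec fun j => (z j : ℝ))))) +
          ∑' z : Fin d → ℤ,
            ENNReal.ofReal (wt α q
              (eunorm d ((A.mulVec fun j => (z j : ℝ)) - A.mulVec fun j => (m j : ℝ))))) := by
        rw [ENNReal.tsum_mul_left, ENNReal.tsum_add]
  _ ≤ ENNReal.ofReal (M * h) * (ENNReal.ofReal T + ENNReal.ofReal T) := by
        exact mul_le_mul_right (add_le_add hsum1 hsum2) _
  _ = ENNReal.ofReal (M * h * (2 * T)) := by
        rw [← ENNReal.ofReal_add hT0 hT0, ← ENNReal.ofReal_mul hMh0]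
        ring_nf
  _ ≤ ENNReal.ofReal ((2 * M * T + 1) * h) := by
        apply ENNReal.ofReal_le_ofReal
        nlinarith
end
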